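/- arXiv:2203.01428 — 2 statements merged into one kernel-verified Lean document; each statement's English description precedes it below -/
import Mathlib

section
/- Let E_1,...,E_k be linear subspaces of R^n and c_1,...,c_k > 0 with ∑ c_i P_{E_i} = I_n. If V and W are proper critical subspaces, then V^⊥ and V + W are critical subspaces, and if moreover V ∩ W ≠ {0}, then V ∩ W is a critical subspace. -/
/-!
For subspaces `K`, `U` with `M = K ⊓ U` one has `tr (P_U P_K) = dim M + tr (P_U (P_K - P_M))`,
and since `P_K - P_M` is again an orthogonal projection the last trace is a sum of squares,
vanishing only when `Mᗮ ⊓ K ⟂ U`. Tracing `P_U` against `∑ cᵢ P_{Eᵢ} = 1` therefore gives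
`∑ cᵢ dim (Eᵢ ⊓ U) ≤ dim U` for every `U`, and equality forces every `Eᵢ` to split as
`(Eᵢ ⊓ U) ⊕ (Eᵢ ⊓ Uᗮ)`. The splitting together with `∑ cᵢ dim Eᵢ = n` makes `Vᗮ` critical,
and submodularity of `U ↦ dim (Eᵢ ⊓ U)` squeezes `V ⊔ W` and `V ⊓ W` between the inequality
and `dim (V ⊔ W) + dim (V ⊓ W) = dim V + dim W`.
-/

open scoped BigOperators

/-- A nonzero subspace `V` is critical for the data `(E, c)` if
`∑ i, c i · dim (E i ⊓ V) = dim V`. -/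
def IsCritical {n k : ℕ} (E : Fin k → Submodule ℝ (EuclideanSpace ℝ (Fin n)))
    (c : Fin k → ℝ) (V : Submodule ℝ (EuclideanSpace ℝ (Fin n))) : Prop :=
  V ≠ ⊥ ∧ (∑ i, c i * (Module.finrank ℝ ↥(E i ⊓ V) : ℝ)) = (Module.finrank ℝ V : ℝ)

open Module LinearMap
open scoped RealInnerProductSpace

theorem Submodule.finrank_inf_add_finrank_inf_le {K V : Type*} [DivisionRing K]
    [AddCommGroup V] [Module K V] [FiniteDimensional K V] (E U W : Submodule K V) :
    finrank K ↥(E ⊓ U) + finrank K ↥(E ⊓ W) ≤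
      finrank K ↥(E ⊓ (U ⊔ W)) + finrank K ↥(E ⊓ (U ⊓ W)) := by
  rw [← finrank_sup_add_finrank_inf_eq, ← inf_inf_distrib_left]
  exact Nat.add_le_add_right (finrank_mono
    (sup_le (inf_le_inf_left _ le_sup_left) (inf_le_inf_left _ le_sup_right))) _

variable {F : Type*} [NormedAddCommGroup F] [InnerProductSpace ℝ F]

namespace LinearMap.IsSymmetricProjection

variable {p q : F →ₗ[ℝ] F}

theorem trace_mul_eq_sum_norm_sq (hp : p.IsSymmetricProjection) (hq : q.IsSymmetricProjection)
    {ι : Type*} [Fintype ι] (b : OrthonormalBasis ι ℝ F) :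
    trace ℝ F (p * q) = ∑ i, ‖p (q (b i))‖ ^ 2 := by
  calc trace ℝ F (p * q) = trace ℝ F (p * p * q * q) := by
        rw [hp.isIdempotentElem.eq, mul_assoc, hq.isIdempotentElem.eq]
    _ = trace ℝ F (q * (p * p * q)) := trace_mul_comm ..
    _ = ∑ i, ⟪b i, q (p (p (q (b i))))⟫ := trace_eq_sum_inner _ b
    _ = ∑ i, ‖p (q (b i))‖ ^ 2 := by
        refine Finset.sum_congr rfl fun i _ => ?_
        rw [← hq.isSymmetric, ← hp.isSymmetric, real_inner_self_eq_norm_sq]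

variable [FiniteDimensional ℝ F]

theorem trace_mul_nonneg (hp : p.IsSymmetricProjection) (hq : q.IsSymmetricProjection) :
    0 ≤ trace ℝ F (p * q) := by
  rw [hp.trace_mul_eq_sum_norm_sq hq (stdOrthonormalBasis ℝ F)]
  positivity

theorem mul_eq_zero_of_trace_mul_eq_zero (hp : p.IsSymmetricProjection)
    (hq : q.IsSymmetricProjection) (h : trace ℝ F (p * q) = 0) : p * q = 0 := by
  set b := stdOrthonormalBasis ℝ F
  rw [hp.trace_mul_eq_sum_norm_sq hq b,
    Finset.sum_eq_zero_iff_of_nonneg fun i _ => sq_nonneg _] at h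
  refine b.toBasis.ext fun i => ?_
  simpa [b.coe_toBasis] using h i (Finset.mem_univ i)

end LinearMap.IsSymmetricProjection

namespace Submodule

variable [FiniteDimensional ℝ F]

theorem trace_starProjection (K : Submodule ℝ F) :
    trace ℝ F K.starProjection = finrank ℝ K :=
  have hK : IsProj K (K.starProjection : F →ₗ[ℝ] F) :=
    ⟨K.starProjection_apply_mem, fun _ hx => starProjection_eq_self_iff.mpr hx⟩
  hK.trace

theorem trace_starProjection_mul_starProjection (U K : Submodule ℝ F) :
    trace ℝ F (U.starProjection * K.starProjection) = finrank ℝ ↥(K ⊓ U) +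
      trace ℝ F (U.starProjection * (K.starProjection - (K ⊓ U).starProjection : F →ₗ[ℝ] F)) := by
  have hM : (U.starProjection * (K ⊓ U).starProjection : F →ₗ[ℝ] F) = (K ⊓ U).starProjection :=
    LinearMap.ext fun x =>
      starProjection_eq_self_iff.mpr (mem_inf.mp (starProjection_apply_mem _ x)).2
  rw [mul_sub, map_sub, hM, trace_starProjection]
  ring

theorem isSymmetricProjection_starProjection_sub_starProjection {M K : Submodule ℝ F}
    (h : M ≤ K) :
    (K.starProjection - M.starProjection : F →ₗ[ℝ] F).IsSymmetricProjection :=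
  (isSymmetricProjection_starProjection M).sub_of_range_le_range
    (isSymmetricProjection_starProjection K) (by simpa using h)

theorem finrank_inf_le_trace_starProjection_mul (U K : Submodule ℝ F) :
    (finrank ℝ ↥(K ⊓ U) : ℝ) ≤ trace ℝ F (U.starProjection * K.starProjection) := by
  rw [trace_starProjection_mul_starProjection]
  have := (isSymmetricProjection_starProjection U).trace_mul_nonneg
    (isSymmetricProjection_starProjection_sub_starProjection (inf_le_left : K ⊓ U ≤ K))
  linarith

theorem orthogonal_inf_le_orthogonal_of_trace_eq {U K : Submodule ℝ F}
    (h : trace ℝ F (U.starProjection * K.starProjection) = finrank ℝ ↥(K ⊓ U)) :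
    (K ⊓ U)ᗮ ⊓ K ≤ Uᗮ := by
  rw [trace_starProjection_mul_starProjection, add_eq_left] at h
  have hzero := (isSymmetricProjection_starProjection U).mul_eq_zero_of_trace_mul_eq_zero
    (isSymmetricProjection_starProjection_sub_starProjection inf_le_left) h
  rintro x ⟨hxM, hxK⟩
  have hx : (K.starProjection - (K ⊓ U).starProjection : F →ₗ[ℝ] F) x = x := by
    simp [starProjection_eq_self_iff.mpr hxK, (starProjection_apply_eq_zero_iff _).mpr hxM]
  rw [← starProjection_apply_eq_zero_iff, ← hx]
  exact LinearMap.congr_fun hzero x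

theorem finrank_le_of_trace_eq {U K : Submodule ℝ F}
    (h : trace ℝ F (U.starProjection * K.starProjection) = finrank ℝ ↥(K ⊓ U)) :
    finrank ℝ K ≤ finrank ℝ ↥(K ⊓ U) + finrank ℝ ↥(K ⊓ Uᗮ) := by
  rw [← finrank_add_inf_finrank_orthogonal (inf_le_left : K ⊓ U ≤ K)]
  gcongr
  exact finrank_mono (le_inf inf_le_right (orthogonal_inf_le_orthogonal_of_trace_eq h))

end Submodule

section WeightedFinrank

variable [FiniteDimensional ℝ F] {ι : Type*} [Fintype ι] (E : ι → Submodule ℝ F) (c : ι → ℝ)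

/-- `IsCritical E c V` unfolds to `V ≠ ⊥ ∧ weightedFinrank E c V = finrank ℝ V`. -/
noncomputable def weightedFinrank (U : Submodule ℝ F) : ℝ :=
  ∑ i, c i * (finrank ℝ ↥(E i ⊓ U) : ℝ)

variable {E c}

theorem sum_mul_trace_mul_starProjection (hBL : ∀ x, ∑ i, c i • (E i).starProjection x = x)
    (A : F →ₗ[ℝ] F) : ∑ i, c i * trace ℝ F (A * (E i).starProjection) = trace ℝ F A := by
  have hsum : ∑ i, c i • ((E i).starProjection : F →ₗ[ℝ] F) = 1 :=
    LinearMap.ext fun x => by simpa using hBL x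
  calc ∑ i, c i * trace ℝ F (A * (E i).starProjection)
      = trace ℝ F (A * ∑ i, c i • ((E i).starProjection : F →ₗ[ℝ] F)) := by
        simp only [Finset.mul_sum, mul_smul_comm, map_sum, map_smul, smul_eq_mul]
    _ = trace ℝ F A := by rw [hsum, mul_one]

theorem sum_mul_finrank_eq_finrank (hBL : ∀ x, ∑ i, c i • (E i).starProjection x = x) :
    ∑ i, c i * (finrank ℝ (E i) : ℝ) = finrank ℝ F := by
  simpa [Submodule.trace_starProjection] using sum_mul_trace_mul_starProjection hBL 1

theorem weightedFinrank_le_finrank (hc : ∀ i, 0 ≤ c i)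
    (hBL : ∀ x, ∑ i, c i • (E i).starProjection x = x) (U : Submodule ℝ F) :
    weightedFinrank E c U ≤ finrank ℝ U := by
  calc weightedFinrank E c U
      ≤ ∑ i, c i * trace ℝ F (U.starProjection * (E i).starProjection) :=
        Finset.sum_le_sum fun i _ => mul_le_mul_of_nonneg_left
          (Submodule.finrank_inf_le_trace_starProjection_mul U (E i)) (hc i)
    _ = finrank ℝ U := by
        rw [sum_mul_trace_mul_starProjection hBL, Submodule.trace_starProjection]

theorem finrank_le_of_weightedFinrank_eq (hc : ∀ i, 0 < c i)
    (hBL : ∀ x, ∑ i, c i • (E i).starProjection x = x) {V : Submodule ℝ F}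
    (hV : weightedFinrank E c V = finrank ℝ V) (i : ι) :
    finrank ℝ (E i) ≤ finrank ℝ ↥(E i ⊓ V) + finrank ℝ ↥(E i ⊓ Vᗮ) := by
  have hle : ∀ j ∈ Finset.univ, c j * (finrank ℝ ↥(E j ⊓ V) : ℝ) ≤
      c j * trace ℝ F (V.starProjection * (E j).starProjection) := fun j _ =>
    mul_le_mul_of_nonneg_left (Submodule.finrank_inf_le_trace_starProjection_mul V (E j))
      (hc j).le
  have hsum : weightedFinrank E c V =
      ∑ j, c j * trace ℝ F (V.starProjection * (E j).starProjection) := by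
    rw [sum_mul_trace_mul_starProjection hBL, Submodule.trace_starProjection, hV]
  have hi := (Finset.sum_eq_sum_iff_of_le hle).mp hsum i (Finset.mem_univ i)
  exact Submodule.finrank_le_of_trace_eq (mul_left_cancel₀ (hc i).ne' hi).symm

theorem weightedFinrank_orthogonal (hc : ∀ i, 0 < c i)
    (hBL : ∀ x, ∑ i, c i • (E i).starProjection x = x) {V : Submodule ℝ F}
    (hV : weightedFinrank E c V = finrank ℝ V) :
    weightedFinrank E c Vᗮ = finrank ℝ Vᗮ := by
  refine le_antisymm (weightedFinrank_le_finrank (fun i => (hc i).le) hBL _) ?_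
  have hsplit : ∑ i, c i * (finrank ℝ (E i) : ℝ) ≤
      weightedFinrank E c V + weightedFinrank E c Vᗮ := by
    rw [weightedFinrank, weightedFinrank, ← Finset.sum_add_distrib]
    refine Finset.sum_le_sum fun i _ => ?_
    rw [← mul_add]
    gcongr
    · exact (hc i).le
    · exact_mod_cast finrank_le_of_weightedFinrank_eq hc hBL hV i
  have hdim : (finrank ℝ V : ℝ) + finrank ℝ Vᗮ = finrank ℝ F := by
    exact_mod_cast V.finrank_add_finrank_orthogonal
  rw [sum_mul_finrank_eq_finrank hBL] at hsplit
  linarith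

variable (E) in
theorem weightedFinrank_add_le (hc : ∀ i, 0 ≤ c i) (V W : Submodule ℝ F) :
    weightedFinrank E c V + weightedFinrank E c W ≤
      weightedFinrank E c (V ⊔ W) + weightedFinrank E c (V ⊓ W) := by
  simp only [weightedFinrank, ← Finset.sum_add_distrib, ← mul_add]
  refine Finset.sum_le_sum fun i _ => mul_le_mul_of_nonneg_left ?_ (hc i)
  exact_mod_cast Submodule.finrank_inf_add_finrank_inf_le (E i) V W

theorem weightedFinrank_sup_eq_and_inf_eq (hc : ∀ i, 0 ≤ c i)
    (hBL : ∀ x, ∑ i, c i • (E i).starProjection x = x) {V W : Submodule ℝ F}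
    (hV : weightedFinrank E c V = finrank ℝ V) (hW : weightedFinrank E c W = finrank ℝ W) :
    weightedFinrank E c (V ⊔ W) = finrank ℝ ↥(V ⊔ W) ∧
      weightedFinrank E c (V ⊓ W) = finrank ℝ ↥(V ⊓ W) := by
  have hsub := weightedFinrank_add_le E hc V W
  have hsup := weightedFinrank_le_finrank hc hBL (V ⊔ W)
  have hinf := weightedFinrank_le_finrank hc hBL (V ⊓ W)
  have hdim : (finrank ℝ ↥(V ⊔ W) : ℝ) + finrank ℝ ↥(V ⊓ W) = finrank ℝ V + finrank ℝ W := by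
    exact_mod_cast Submodule.finrank_sup_add_finrank_inf_eq V W
  constructor <;> linarith

end WeightedFinrank

theorem stmt11_general {n k : ℕ} (E : Fin k → Submodule ℝ (EuclideanSpace ℝ (Fin n)))
    (c : Fin k → ℝ) (hc : ∀ i, 0 < c i)
    (hBL : ∀ x : EuclideanSpace ℝ (Fin n),
      ∑ i, c i • ((Submodule.orthogonalProjectionOnto (E i) x : EuclideanSpace ℝ (Fin n))) = x)
    (V W : Submodule ℝ (EuclideanSpace ℝ (Fin n))) (hV : V ≠ ⊤)
    (hVc : IsCritical E c V) (hWc : IsCritical E c W) :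
    IsCritical E c Vᗮ ∧ IsCritical E c (V ⊔ W) ∧
      (V ⊓ W ≠ ⊥ → IsCritical E c (V ⊓ W)) := by
  obtain ⟨hV0, hVc⟩ := hVc
  obtain ⟨-, hWc⟩ := hWc
  obtain ⟨hsup, hinf⟩ := weightedFinrank_sup_eq_and_inf_eq (fun i => (hc i).le) hBL hVc hWc
  refine ⟨⟨?_, weightedFinrank_orthogonal hc hBL hVc⟩, ⟨?_, hsup⟩, fun h => ⟨h, hinf⟩⟩
  · exact mt Submodule.orthogonal_eq_bot_iff.mp hV
  · exact fun h => hV0 (eq_bot_mono le_sup_left h)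

theorem stmt11 {n k : ℕ} (E : Fin k → Submodule ℝ (EuclideanSpace ℝ (Fin n)))
    (c : Fin k → ℝ) (hc : ∀ i, 0 < c i)
    (hBL : ∀ x : EuclideanSpace ℝ (Fin n),
      ∑ i, c i • ((Submodule.orthogonalProjectionOnto (E i) x : EuclideanSpace ℝ (Fin n))) = x)
    (V W : Submodule ℝ (EuclideanSpace ℝ (Fin n))) (hV : V ≠ ⊤) (hW : W ≠ ⊤)
    (hVc : IsCritical E c V) (hWc : IsCritical E c W) :
    IsCritical E c Vᗮ ∧ IsCritical E c (V ⊔ W) ∧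
      (V ⊓ W ≠ ⊥ → IsCritical E c (V ⊓ W)) :=
  stmt11_general E c hc hBL V W hV hVc hWc
end

section
/- Let E_1,...,E_k be linear subspaces of R^n and c_1,...,c_k > 0 with ∑ c_i P_{E_i} = I_n, and let Φ : R^n → R^n be a positive definite symmetric linear map all of whose eigenspaces are critical subspaces of the data. Then for every x ∈ R^n, ‖Φx‖² = min { ∑_{i=1}^k c_i ‖Φ x_i‖² : x = ∑_{i=1}^k c_i x_i, x_i ∈ E_i }, and the minimum is attained at x_i = P_{E_i} x. -/
open scoped BigOperators

/-!
Every eigenspace `V` of `Φ` is invariant under each projection `P i` onto `E i`. Summing the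
identity `∑ i, c i * ‖P i y‖ ^ 2 = ‖y‖ ^ 2` over an orthonormal basis `b` of `V` gives
`∑ i, c i * ∑ j, ‖P i (b j)‖ ^ 2 = dim V`, while the same sum with `P i` replaced by the
projection onto `E i ⊓ V` is a trace, `∑ i, c i * dim (E i ⊓ V)`. Criticality makes the two
equal, and termwise `‖P i (b j)‖ ≥ ‖P_{E i ⊓ V} (b j)‖`, so `P i (b j) ∈ E i ⊓ V`.

Hence `Φ` commutes with every `P i` and maps each `E i` into itself, so `Φ x = ∑ i, c i • Φ (x i)`
is again a decomposition along the `E i`, and the claim reduces to the case `Φ = 1`, where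
`∑ i, c i * ‖x i‖ ^ 2 = ‖x‖ ^ 2 + ∑ i, c i * ‖x i - P i x‖ ^ 2`.
-/

open scoped InnerProductSpace
open Module Submodule

section Trace

variable {𝕜 F : Type*} [RCLike 𝕜] [NormedAddCommGroup F] [InnerProductSpace 𝕜 F]
  [FiniteDimensional 𝕜 F]

theorem LinearMap.trace_comp_starProjection (T : F →ₗ[𝕜] F) (K : Submodule 𝕜 F)
    {ι : Type*} [Fintype ι] (b : OrthonormalBasis ι 𝕜 K) :
    trace 𝕜 F (T ∘ₗ K.starProjection) = ∑ i, ⟪(b i : F), T (b i)⟫_𝕜 := by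
  have : T ∘ₗ (K.starProjection : F →ₗ[𝕜] F) =
      (T ∘ₗ K.subtype) ∘ₗ (K.orthogonalProjectionOnto : F →ₗ[𝕜] K) := rfl
  rw [this, trace_comp_comm', trace_eq_sum_inner _ b]
  simp

theorem Submodule.trace_starProjection_s13 (K : Submodule 𝕜 F) :
    LinearMap.trace 𝕜 F K.starProjection = finrank 𝕜 K :=
  LinearMap.IsProj.trace
    ⟨fun _ => K.starProjection_apply_mem _, fun _ hx => K.starProjection_eq_self_iff.mpr hx⟩

end Trace

variable {F : Type*} [NormedAddCommGroup F] [InnerProductSpace ℝ F] [FiniteDimensional ℝ F]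

theorem Submodule.real_inner_starProjection_self (K : Submodule ℝ F) (x : F) :
    ⟪x, K.starProjection x⟫_ℝ = ‖K.starProjection x‖ ^ 2 := by
  simpa [real_inner_comm] using K.re_inner_starProjection_eq_normSq x

theorem Submodule.sum_norm_sq_starProjection_of_le {U V : Submodule ℝ F} (h : U ≤ V)
    {ι : Type*} [Fintype ι] (b : OrthonormalBasis ι ℝ V) :
    ∑ i, ‖U.starProjection (b i)‖ ^ 2 = finrank ℝ U := by
  have hUV : (U.starProjection : F →ₗ[ℝ] F) ∘ₗ (V.starProjection : F →ₗ[ℝ] F) =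
      U.starProjection := by
    ext x
    exact congr($(starProjection_comp_starProjection_of_le h) x)
  simp only [← U.real_inner_starProjection_self]
  rw [← U.trace_starProjection_s13, ← hUV, LinearMap.trace_comp_starProjection _ V b]; rfl

section ParsevalFrame

variable {ι : Type*} [Fintype ι] {E : ι → Submodule ℝ F} {c : ι → ℝ}

theorem sum_mul_norm_sq_starProjection (hE : ∀ x, ∑ i, c i • (E i).starProjection x = x)
    (x : F) : ∑ i, c i * ‖(E i).starProjection x‖ ^ 2 = ‖x‖ ^ 2 := by
  calc ∑ i, c i * ‖(E i).starProjection x‖ ^ 2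
      = ⟪x, ∑ i, c i • (E i).starProjection x⟫_ℝ := by
        simp [inner_sum, real_inner_smul_right, real_inner_starProjection_self]
    _ = ‖x‖ ^ 2 := by rw [hE, real_inner_self_eq_norm_sq]

theorem sum_mul_norm_sq_eq_norm_sq_add (hE : ∀ x, ∑ i, c i • (E i).starProjection x = x)
    {x : F} {y : ι → F} (hy : ∀ i, y i ∈ E i) (hx : x = ∑ i, c i • y i) :
    ∑ i, c i * ‖y i‖ ^ 2 = ‖x‖ ^ 2 + ∑ i, c i * ‖y i - (E i).starProjection x‖ ^ 2 := by
  have hcross : ∑ i, c i * ⟪y i, (E i).starProjection x⟫_ℝ = ‖x‖ ^ 2 := by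
    calc ∑ i, c i * ⟪y i, (E i).starProjection x⟫_ℝ
        = ⟪∑ i, c i • y i, x⟫_ℝ := by
          simp [sum_inner, real_inner_smul_left, ← inner_starProjection_left_eq_right,
            starProjection_eq_self_iff.mpr (hy _)]
      _ = ‖x‖ ^ 2 := by rw [← hx, real_inner_self_eq_norm_sq]
  have hproj := sum_mul_norm_sq_starProjection hE x
  simp only [norm_sub_sq_real, mul_add, mul_sub, Finset.sum_add_distrib, Finset.sum_sub_distrib]
  simp only [mul_left_comm (c _) 2, ← Finset.mul_sum, hcross, hproj]
  ring

theorem norm_sq_le_sum_mul_norm_sq (hc : ∀ i, 0 ≤ c i)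
    (hE : ∀ x, ∑ i, c i • (E i).starProjection x = x)
    {x : F} {y : ι → F} (hy : ∀ i, y i ∈ E i) (hx : x = ∑ i, c i • y i) :
    ‖x‖ ^ 2 ≤ ∑ i, c i * ‖y i‖ ^ 2 := by
  rw [sum_mul_norm_sq_eq_norm_sq_add hE hy hx]
  exact le_add_of_nonneg_right (Finset.sum_nonneg fun i _ => mul_nonneg (hc i) (sq_nonneg _))

theorem Submodule.starProjection_inf_starProjection (U V : Submodule ℝ F) (x : F) :
    (U ⊓ V).starProjection (U.starProjection x) = (U ⊓ V).starProjection x :=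
  congr($(starProjection_comp_starProjection_of_le (inf_le_left : U ⊓ V ≤ U)) x)

theorem Submodule.norm_starProjection_inf_le (U V : Submodule ℝ F) (x : F) :
    ‖(U ⊓ V).starProjection x‖ ≤ ‖U.starProjection x‖ := by
  rw [← starProjection_inf_starProjection]
  exact norm_starProjection_apply_le _ _

theorem sum_mul_sum_norm_sq_starProjection (hE : ∀ x, ∑ i, c i • (E i).starProjection x = x)
    {V : Submodule ℝ F} {κ : Type*} [Fintype κ] (b : OrthonormalBasis κ ℝ V) :
    ∑ i, c i * ∑ j, ‖(E i).starProjection (b j)‖ ^ 2 = finrank ℝ V := by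
  simp only [Finset.mul_sum, Finset.sum_comm (γ := ι), sum_mul_norm_sq_starProjection hE]
  simp [fun j => show ‖(b j : F)‖ = 1 from b.norm_eq_one j,
    ← Module.finrank_eq_card_basis b.toBasis]

theorem starProjection_mem_of_sum_mul_finrank_inf_eq (hc : ∀ i, 0 < c i)
    (hE : ∀ x, ∑ i, c i • (E i).starProjection x = x) {V : Submodule ℝ F}
    (hV : ∑ i, c i * (finrank ℝ ↥(E i ⊓ V) : ℝ) = finrank ℝ V) (i : ι) {v : F} (hv : v ∈ V) :
    (E i).starProjection v ∈ V := by
  set b := stdOrthonormalBasis ℝ V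
  set gap : ι → Fin (finrank ℝ V) → ℝ := fun i j =>
    ‖(E i).starProjection (b j)‖ ^ 2 - ‖(E i ⊓ V).starProjection (b j)‖ ^ 2
  have gap_nonneg (i j) : 0 ≤ gap i j :=
    sub_nonneg.mpr (pow_le_pow_left₀ (norm_nonneg _) (norm_starProjection_inf_le _ _ _) 2)
  have sum_gap : ∑ i, c i * ∑ j, gap i j = 0 := by
    simp only [gap, Finset.sum_sub_distrib, mul_sub, sum_mul_sum_norm_sq_starProjection hE b,
      sum_norm_sq_starProjection_of_le inf_le_right b, hV, sub_self]
  have gap_eq_zero (j) : gap i j = 0 := by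
    have hi := (Finset.sum_eq_zero_iff_of_nonneg fun i _ =>
      mul_nonneg (hc i).le (Finset.sum_nonneg fun j _ => gap_nonneg i j)).mp sum_gap i
      (Finset.mem_univ i)
    exact (Finset.sum_eq_zero_iff_of_nonneg fun j _ => gap_nonneg i j).mp
      ((mul_eq_zero.mp hi).resolve_left (hc i).ne') j (Finset.mem_univ j)
  have hb (j) : (E i).starProjection (b j) ∈ V := by
    refine (inf_le_right : E i ⊓ V ≤ V) (((E i ⊓ V).mem_iff_norm_starProjection _).mpr ?_)
    rw [starProjection_inf_starProjection]
    exact ((sq_eq_sq₀ (norm_nonneg _) (norm_nonneg _)).mp (sub_eq_zero.mp (gap_eq_zero j))).symm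
  have hv' : ∑ j, b.repr ⟨v, hv⟩ j • (b j : F) = v := by
    simpa using congrArg Subtype.val (b.sum_repr ⟨v, hv⟩)
  rw [← hv', map_sum]
  exact sum_mem fun j _ => by rw [map_smul]; exact V.smul_mem _ (hb j)

end ParsevalFrame

theorem Module.End.commute_of_mapsTo_eigenspace {R M : Type*} [CommRing R] [AddCommGroup M]
    [Module R M] {f g : Module.End R M} (hf : ⨆ μ, eigenspace f μ = ⊤)
    (hg : ∀ μ, Set.MapsTo g (eigenspace f μ) (eigenspace f μ)) : Commute f g := by
  suffices h : ⊤ ≤ LinearMap.eqLocus (f * g) (g * f) from LinearMap.ext fun v => h trivial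
  rw [← hf]
  refine iSup_le fun μ v hv => ?_
  simp [LinearMap.mem_eqLocus, mem_eigenspace_iff.mp hv, mem_eigenspace_iff.mp (hg μ hv)]

theorem stmt13_general {n k : ℕ} (E : Fin k → Submodule ℝ (EuclideanSpace ℝ (Fin n)))
    (c : Fin k → ℝ) (hc : ∀ i, 0 < c i)
    (hBL : ∀ x : EuclideanSpace ℝ (Fin n),
      ∑ i, c i • ((Submodule.orthogonalProjectionOnto (E i) x : EuclideanSpace ℝ (Fin n))) = x)
    (Φ : EuclideanSpace ℝ (Fin n) →ₗ[ℝ] EuclideanSpace ℝ (Fin n))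
    (hsym : ∀ x y, (inner ℝ (Φ x) y : ℝ) = inner ℝ x (Φ y))
    (heig : ∀ μ : ℝ, Module.End.eigenspace Φ μ ≠ ⊥ →
      IsCritical E c (Module.End.eigenspace Φ μ)) :
    ∀ x : EuclideanSpace ℝ (Fin n),
      (∀ xi : Fin k → EuclideanSpace ℝ (Fin n), (∀ i, xi i ∈ E i) →
        x = ∑ i, c i • xi i → ‖Φ x‖ ^ 2 ≤ ∑ i, c i * ‖Φ (xi i)‖ ^ 2) ∧
      ‖Φ x‖ ^ 2 =
        ∑ i, c i * ‖Φ ((Submodule.orthogonalProjectionOnto (E i) x : EuclideanSpace ℝ (Fin n)))‖ ^ 2 := by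
  have hE : ∀ x, ∑ i, c i • (E i).starProjection x = x := by simpa using hBL
  have hspan : ⨆ μ, Module.End.eigenspace Φ μ = ⊤ :=
    Submodule.orthogonal_eq_bot_iff.mp
      (LinearMap.IsSymmetric.orthogonalComplement_iSup_eigenspaces_eq_bot hsym)
  have hcomm (i) : Commute Φ ((E i).starProjection : _ →ₗ[ℝ] _) := by
    refine Module.End.commute_of_mapsTo_eigenspace hspan fun μ v hv => ?_
    by_cases hμ : Module.End.eigenspace Φ μ = ⊥
    · simp only [hμ, SetLike.mem_coe, mem_bot] at hv ⊢
      simp [hv]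
    · exact starProjection_mem_of_sum_mul_finrank_inf_eq hc hE (heig μ hμ).2 i hv
  have hΦ (i y) : Φ ((E i).starProjection y) = (E i).starProjection (Φ y) :=
    LinearMap.congr_fun (hcomm i) y
  intro x
  refine ⟨fun y hy hx => norm_sq_le_sum_mul_norm_sq (fun i => (hc i).le) hE (fun i => ?_) ?_, ?_⟩
  · rw [← starProjection_eq_self_iff.mpr (hy i), hΦ]
    exact starProjection_apply_mem _ _
  · simp [hx, map_sum]
  · simp [hΦ, sum_mul_norm_sq_starProjection hE]

theorem stmt13 {n k : ℕ} (E : Fin k → Submodule ℝ (EuclideanSpace ℝ (Fin n)))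
    (c : Fin k → ℝ) (hc : ∀ i, 0 < c i)
    (hBL : ∀ x : EuclideanSpace ℝ (Fin n),
      ∑ i, c i • ((Submodule.orthogonalProjectionOnto (E i) x : EuclideanSpace ℝ (Fin n))) = x)
    (Φ : EuclideanSpace ℝ (Fin n) →ₗ[ℝ] EuclideanSpace ℝ (Fin n))
    (hsym : ∀ x y, (inner ℝ (Φ x) y : ℝ) = inner ℝ x (Φ y))
    (hpos : ∀ x, x ≠ 0 → 0 < (inner ℝ (Φ x) x : ℝ))
    (heig : ∀ μ : ℝ, Module.End.eigenspace Φ μ ≠ ⊥ →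
      IsCritical E c (Module.End.eigenspace Φ μ)) :
    ∀ x : EuclideanSpace ℝ (Fin n),
      (∀ xi : Fin k → EuclideanSpace ℝ (Fin n), (∀ i, xi i ∈ E i) →
        x = ∑ i, c i • xi i → ‖Φ x‖ ^ 2 ≤ ∑ i, c i * ‖Φ (xi i)‖ ^ 2) ∧
      ‖Φ x‖ ^ 2 =
        ∑ i, c i * ‖Φ ((Submodule.orthogonalProjectionOnto (E i) x : EuclideanSpace ℝ (Fin n)))‖ ^ 2 :=
  stmt13_general E c hc hBL Φ hsym heig
end
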